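/- In any execution of the OTM abstract machine, claimed locations are released only by commit, abort, or retry: if in a state Σ the working memory satisfies Δ(r) = (M, k) and the machine performs any transition other than a commit of the transaction currently claiming r, an abort involving it, or a restart (retry) of it, then in the resulting state Σ' the location r is still claimed, i.e., Δ'(r) = (M', j) for some term M' and some transaction name j (where j may differ from k only as the result of a merge renaming k to j). -/

import Mathlib

/-!  A formalisation of the OTM (Open Transactional Memory) abstract machine
     of "Open Transactional Memory" (Figures 3–8), together with
     Guerraoui–Kapałka style histories and opacity graphs. -/

abbrev Loc : Type := ℕ
abbrev TrName : Type := ℕ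
abbrev TId : Type := ℕ

/-- Terms of the Haskell-like language with the OTM primitives (Fig. 3). -/
inductive Term : Type where
  | var : ℕ → Term
  | app : Term → Term → Term
  | lam : ℕ → Term → Term
  | loc : Loc → Term
  | tidT : TId → Term
  | chr : Char → Term
  | unit : Term
  | ret : Term → Term
  | bind : Term → Term → Term
  | throw : Term → Term
  | catchE : Term → Term → Term
  | putChar : Char → Term
  | getChar : Term
  | fork : Term → Term
  | atomic : Term → Term
  | isolated : Term → Term
  | retry : Term
  | orElse : Term → Term → Term
  | newOTVar : Term → Term
  | readOTVar : Loc → Term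
  | writeOTVar : Loc → Term → Term
  deriving DecidableEq

/-- Values (Fig. 3): everything except variables and applications. -/
def Term.isValue : Term → Bool
  | .var _ => false
  | .app _ _ => false
  | _ => true

/-- Pure term reductions `M → N` (Fig. 4), parameterised by the
    (otherwise unspecified) evaluation function `𝒱`. -/
inductive TermStep (V : Term → Option Term) : Term → Term → Prop where
  | eval {M N : Term} :
      M.isValue = false → V M = some N → N.isValue = true → TermStep V M N
  | bindVal {M N : Term} : TermStep V (.bind (.ret M) N) (.app N M)
  | bindRetry {M : Term} : TermStep V (.bind .retry M) .retry
  | bindThrow {M N : Term} : TermStep V (.bind (.throw N) M) (.throw N)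
  | catchRetry {M : Term} : TermStep V (.catchE .retry M) .retry
  | catchRet {M N : Term} : TermStep V (.catchE (.ret N) M) (.ret N)
  | catchThrow {M N : Term} : TermStep V (.catchE (.throw M) N) (.app N M)

/-- Evaluation contexts `𝔼 ::= [] | 𝔼 >>= M`: a context is the list of
    the second arguments of the enclosing binds. -/
abbrev Ctx : Type := List Term

/-- `plug E M` is `𝔼[M]`. -/
def plug (E : Ctx) (M : Term) : Term := E.foldl Term.bind M

/-- Threads: `⟨M⟩_t` (outside transactions) and `⟨M; N⟩_{t,k}`
    (inside transaction `k`, with continuation `N`). -/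
inductive Thread : Type where
  | plain : TId → Term → Thread
  | tx : TId → Term → Term → TrName → Thread
  deriving DecidableEq

def Thread.tid : Thread → TId
  | .plain t _ => t
  | .tx t _ _ _ => t

/-- Thread families, presented as lists (parallel composition modulo
    permutation is built into the step relation). -/
abbrev Family : Type := List Thread

def Family.tids (P : Family) : List TId := P.map Thread.tid

/-- The names of the active transactions of a family (`transactions(P)`). -/
def Family.txNames (P : Family) : List TrName :=
  P.filterMap fun T =>
    match T with
    | .tx _ _ _ k => some k
    | .plain _ _ => none

/-- The forest `Ψ` of thread identifiers. -/
structure Psi : Type where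
  nodes : Set TId
  parent : TId → Option TId

def Psi.addRoot (ψ : Psi) (t : TId) : Psi :=
  ⟨insert t ψ.nodes, ψ.parent⟩

/-- `add_child(t, t', Ψ)`. -/
def Psi.addChild (ψ : Psi) (t t' : TId) : Psi :=
  ⟨insert t' ψ.nodes, fun u => if u = t' then some t else ψ.parent u⟩

/-- `ψ.rootOf t r` : `r = root(t, Ψ)`. -/
def Psi.rootOf (ψ : Psi) (t r : TId) : Prop :=
  Relation.ReflTransGen (fun a b => ψ.parent a = some b) t r ∧ ψ.parent r = none

open Classical in
/-- `remove(r, Ψ)`: remove the whole tree rooted at `r`. -/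
noncomputable def Psi.remove (ψ : Psi) (r : TId) : Psi :=
  ⟨{t ∈ ψ.nodes | ¬ ψ.rootOf t r}, fun t => if ψ.rootOf t r then none else ψ.parent t⟩

/-- The memory `Σ = ⟨Θ, Δ, Ψ⟩` (together with the supply `used` of
    transaction names already used, guaranteeing freshness of new names). -/
structure Mem : Type where
  heap : Loc → Option Term
  work : Loc → Option (Term × TrName)
  psi : Psi
  used : Set TrName

/-- Machine states `(Σ; P)`. -/
structure MState : Type where
  mem : Mem
  threads : Family

/-- Pointwise update of a partial function. -/
def updFn {α : Type} (f : Loc → Option α) (r : Loc) (v : α) : Loc → Option α :=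
  fun s => if s = r then some v else f s

/-- `Δ[k ↦ j]` : rename every claim of transaction `k` into `j` (Fig. 8). -/
def renameWork (Δ : Loc → Option (Term × TrName)) (k j : TrName) :
    Loc → Option (Term × TrName) :=
  fun r => (Δ r).map fun p => if p.2 = k then (p.1, j) else p

def Thread.renameTx (T : Thread) (k j : TrName) : Thread :=
  match T with
  | .tx t M N k' => if k' = k then .tx t M N j else .tx t M N k'
  | .plain t M => .plain t M

/-- `P[k ↦ j]` (Fig. 8). -/
def Family.renameTx (P : Family) (k j : TrName) : Family :=
  P.map (Thread.renameTx · k j)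

/-- `cleanup(k, Σ)` (Fig. 8). -/
def cleanup (k : TrName) (Δ : Loc → Option (Term × TrName)) :
    Loc → Option (Term × TrName) := fun r =>
  match Δ r with
  | some (M, k') => if k' = k then none else some (M, k')
  | none => none

/-- `commit(k, Σ)` (Fig. 8). -/
def commitMem (k : TrName) (Θ : Loc → Option Term)
    (Δ : Loc → Option (Term × TrName)) : Loc → Option Term := fun r =>
  match Δ r with
  | some (M, k') => if k' = k then some M else Θ r
  | none => Θ r

/-- `leak(k, Σ)` (Fig. 8). -/
def leakMem (k : TrName) (Θ : Loc → Option Term)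
    (Δ : Loc → Option (Term × TrName)) : Loc → Option Term := fun r =>
  match Θ r with
  | some M => some M
  | none =>
    match Δ r with
    | some (M, k') => if k' = k then some M else none
    | none => none

/-- Operations recorded in histories (reads, writes, commits, aborts and,
    for OTM, explicit merges of one transaction into another). -/
inductive Op : Type where
  | read : TrName → Loc → Term → Op
  | write : TrName → Loc → Term → Op
  | commit : TrName → Op
  | abort : TrName → Op
  | merge : TrName → TrName → Op
  deriving DecidableEq

/-- Histories: time-ordered sequences of operations. -/
abbrev History : Type := List Op

/-- Transition labels `β` (Figs. 5–7). -/
inductive Label : Type where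
  | tau : Label
  | inpC : Char → Label
  | outC : Char → Label
  | newT : TrName → Label
  | co : TrName → Label
  | ab : TrName → TId → Term → Label
  | abBar : TrName → TId → Term → Label
  deriving DecidableEq

/-- `transaction(β)` (Fig. 8). -/
def Label.txName : Label → Option TrName
  | .newT k => some k
  | .co k => some k
  | .ab k _ _ => some k
  | .abBar k _ _ => some k
  | _ => none

mutual
  /-- The state transitions `(Σ; P) --β--> (Σ'; P')` of the OTM abstract
      machine (Figs. 5, 6 and 7), instrumented with the list of history
      operations the transition issues. -/
  inductive Step (V : Term → Option Term) :
      MState → Label → List Op → MState → Prop where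
    /- structural congruence: `∥` is commutative and associative -/
    | permC {m m' : Mem} {P Q P' Q' : Family} {β : Label} {ops : List Op} :
        List.Perm P Q → List.Perm P' Q' →
        Step V ⟨m, P⟩ β ops ⟨m', P'⟩ → Step V ⟨m, Q⟩ β ops ⟨m', Q'⟩
    /- IO transitions (Fig. 5) -/
    | inChar {m : Mem} {P : Family} {E : Ctx} {t : TId} {c : Char} :
        Step V ⟨m, .plain t (plug E .getChar) :: P⟩ (.inpC c) []
               ⟨m, .plain t (plug E (.ret (.chr c))) :: P⟩
    | outChar {m : Mem} {P : Family} {E : Ctx} {t : TId} {c : Char} :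
        Step V ⟨m, .plain t (plug E (.putChar c)) :: P⟩ (.outC c) []
               ⟨m, .plain t (plug E (.ret .unit)) :: P⟩
    | termIO {m : Mem} {P : Family} {E : Ctx} {t : TId} {M N : Term} :
        TermStep V M N →
        Step V ⟨m, .plain t (plug E M) :: P⟩ .tau []
               ⟨m, .plain t (plug E N) :: P⟩
    | forkIO {m : Mem} {P : Family} {E : Ctx} {t t' : TId} {M : Term} :
        t' ∉ Family.tids (.plain t (plug E (.fork M)) :: P) →
        Step V ⟨m, .plain t (plug E (.fork M)) :: P⟩ .tau []
               ⟨{m with psi := m.psi.addRoot t'},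
                .plain t (plug E (.ret (.tidT t'))) :: .plain t' M :: P⟩
    /- transactional τ-transitions (Fig. 6) -/
    | termT {m : Mem} {P : Family} {E : Ctx} {t : TId} {k : TrName} {M M' N : Term} :
        TermStep V M M' →
        Step V ⟨m, .tx t (plug E M) N k :: P⟩ .tau []
               ⟨m, .tx t (plug E M') N k :: P⟩
    | forkT {m : Mem} {P : Family} {E : Ctx} {t t' : TId} {k : TrName} {M N : Term} :
        t' ∉ Family.tids (.tx t (plug E (.fork M)) N k :: P) →
        Step V ⟨m, .tx t (plug E (.fork M)) N k :: P⟩ .tau []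
               ⟨{m with psi := m.psi.addChild t t'},
                .tx t (plug E (.ret (.tidT t'))) N k :: .tx t' M (.ret .unit) k :: P⟩
    | newVar {m : Mem} {P : Family} {E : Ctx} {t : TId} {k : TrName} {M N : Term} {r : Loc} :
        m.heap r = none → m.work r = none →
        Step V ⟨m, .tx t (plug E (.newOTVar M)) N k :: P⟩ .tau [.write k r M]
               ⟨{m with work := updFn m.work r (M, k)},
                .tx t (plug E (.ret (.loc r))) N k :: P⟩
    | read1 {m : Mem} {P : Family} {E : Ctx} {t : TId} {k : TrName} {M N : Term} {r : Loc} :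
        m.work r = none → m.heap r = some M →
        Step V ⟨m, .tx t (plug E (.readOTVar r)) N k :: P⟩ .tau [.read k r M]
               ⟨{m with work := updFn m.work r (M, k)},
                .tx t (plug E (.ret M)) N k :: P⟩
    | read2 {m : Mem} {P : Family} {E : Ctx} {t : TId} {k j : TrName} {M N : Term} {r : Loc} :
        m.work r = some (M, j) →
        Step V ⟨m, .tx t (plug E (.readOTVar r)) N k :: P⟩ .tau
               (if k = j then [.read k r M] else [.merge k j, .read j r M])
               ⟨{m with work := renameWork m.work k j},
                Family.renameTx (.tx t (plug E (.ret M)) N k :: P) k j⟩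
    | write1 {m : Mem} {P : Family} {E : Ctx} {t : TId} {k : TrName} {M N : Term} {r : Loc} :
        m.work r = none →
        Step V ⟨m, .tx t (plug E (.writeOTVar r M)) N k :: P⟩ .tau [.write k r M]
               ⟨{m with work := updFn m.work r (M, k)},
                .tx t (plug E (.ret .unit)) N k :: P⟩
    | write2 {m : Mem} {P : Family} {E : Ctx} {t : TId} {k j : TrName} {M M₀ N : Term} {r : Loc} :
        m.work r = some (M₀, j) →
        Step V ⟨m, .tx t (plug E (.writeOTVar r M)) N k :: P⟩ .tau
               (if k = j then [.write k r M] else [.merge k j, .write j r M])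
               ⟨{m with work := updFn (renameWork m.work k j) r (M, j)},
                Family.renameTx (.tx t (plug E (.ret .unit)) N k :: P) k j⟩
    | orElse1 {m m' : Mem} {P Q₁ Q₂ : Family} {E : Ctx} {t : TId} {k j : TrName}
        {M M' N N' R : Term} {ops : List Op} :
        (R = .ret N' ∨ R = .throw N') →
        StepTauStar V ⟨m, .tx t M (.ret .unit) k :: P⟩ ops
                       ⟨m', Q₁ ++ .tx t R (.ret .unit) j :: Q₂⟩ →
        Step V ⟨m, .tx t (plug E (.orElse M M')) N k :: P⟩ .tau ops
               ⟨m', Q₁ ++ .tx t (plug E R) N j :: Q₂⟩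
    | orElse2 {m m' : Mem} {P Q₁ Q₂ : Family} {E : Ctx} {t : TId} {k j : TrName}
        {M M' N : Term} {ops : List Op} :
        StepTauStar V ⟨m, .tx t M (.ret .unit) k :: P⟩ ops
                       ⟨m', Q₁ ++ .tx t .retry (.ret .unit) j :: Q₂⟩ →
        Step V ⟨m, .tx t (plug E (.orElse M M')) N k :: P⟩ .tau []
               ⟨m, .tx t (plug E M') N k :: P⟩
    | isolatedR {m m' : Mem} {P Q₁ Q₂ : Family} {E : Ctx} {t : TId} {k j : TrName}
        {M N N' R : Term} {ops : List Op} :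
        (R = .ret N' ∨ R = .throw N') →
        StepTauStar V ⟨m, .tx t M (.ret .unit) k :: P⟩ ops
                       ⟨m', Q₁ ++ .tx t R (.ret .unit) j :: Q₂⟩ →
        Step V ⟨m, .tx t (plug E (.isolated M)) N k :: P⟩ .tau ops
               ⟨m', Q₁ ++ .tx t (plug E R) N j :: Q₂⟩
    /- transaction management transitions (Fig. 7) -/
    | newTx {m : Mem} {t : TId} {M N : Term} {k : TrName} :
        k ∉ m.used →
        Step V ⟨m, [.plain t (.bind (.atomic M) N)]⟩ (.newT k) []
               ⟨{m with used := insert k m.used}, [.tx t M N k]⟩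
    | commitTx {m : Mem} {t : TId} {M N : Term} {k : TrName} :
        Step V ⟨m, [.tx t (.ret M) N k]⟩ (.co k) [.commit k]
               ⟨{m with heap := commitMem k m.heap m.work,
                        work := cleanup k m.work},
                [.plain t (.bind (.ret M) N)]⟩
    | abort1 {m : Mem} {t : TId} {M N : Term} {k : TrName} {r : TId} :
        m.psi.rootOf t r →
        Step V ⟨m, [.tx t (.throw M) N k]⟩ (.ab k t M) [.abort k]
               ⟨{m with heap := leakMem k m.heap m.work,
                        work := cleanup k m.work,
                        psi := m.psi.remove r},
                [.plain t (.bind (.throw M) N)]⟩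
    | abort2 {m : Mem} {t t' : TId} {M M' N : Term} {k : TrName} {r : TId} :
        m.psi.rootOf t r → m.psi.rootOf t' r →
        Step V ⟨m, [.tx t' M' N k]⟩ (.abBar k t M) []
               ⟨{m with heap := leakMem k m.heap m.work,
                        work := cleanup k m.work,
                        psi := m.psi.remove r},
                [.plain t' (.bind (.throw M) N)]⟩
    | abort3 {m : Mem} {t t' : TId} {M M' N : Term} {k : TrName} {r : TId} :
        m.psi.rootOf t r → ¬ m.psi.rootOf t' r →
        Step V ⟨m, [.tx t' M' N k]⟩ (.abBar k t M) []
               ⟨{m with heap := leakMem k m.heap m.work,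
                        work := cleanup k m.work,
                        psi := m.psi.remove r},
                [.plain t' .retry]⟩
    | mcastAb {m m' : Mem} {P P' Q Q' : Family} {k : TrName} {t : TId} {M : Term}
        {ops₁ ops₂ : List Op} :
        Step V ⟨m, P⟩ (.ab k t M) ops₁ ⟨m', P'⟩ →
        Step V ⟨m, Q⟩ (.abBar k t M) ops₂ ⟨m', Q'⟩ →
        Step V ⟨m, P ++ Q⟩ (.ab k t M) (ops₁ ++ ops₂) ⟨m', P' ++ Q'⟩
    | mcastCo {m m' : Mem} {P P' Q Q' : Family} {k : TrName} {ops₁ ops₂ : List Op} :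
        Step V ⟨m, P⟩ (.co k) ops₁ ⟨m', P'⟩ →
        Step V ⟨m, Q⟩ (.co k) ops₂ ⟨m', Q'⟩ →
        Step V ⟨m, P ++ Q⟩ (.co k) ((ops₁ ++ ops₂).dedup) ⟨m', P' ++ Q'⟩
    | mcastGroup {m m' : Mem} {P P' Q : Family} {β : Label} {k : TrName} {ops : List Op} :
        Step V ⟨m, P⟩ β ops ⟨m', P'⟩ →
        β.txName = some k → k ∉ Family.txNames Q →
        Step V ⟨m, P ++ Q⟩ β ops ⟨m', P' ++ Q⟩

  /-- Reflexive-transitive closure of internal (`τ`) transitions,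
      accumulating the issued operations. -/
  inductive StepTauStar (V : Term → Option Term) :
      MState → List Op → MState → Prop where
    | refl (s : MState) : StepTauStar V s [] s
    | cons {s₁ s₂ s₃ : MState} {ops₁ ops₂ : List Op} :
        Step V s₁ .tau ops₁ s₂ → StepTauStar V s₂ ops₂ s₃ →
        StepTauStar V s₁ (ops₁ ++ ops₂) s₃
end

/-- Executions of the abstract machine, together with the history
    (sequence of issued operations) they generate. -/
inductive Exec (V : Term → Option Term) : MState → History → MState → Prop where
  | refl (s : MState) : Exec V s [] s
  | step {s₁ s₂ s₃ : MState} {β : Label} {ops : List Op} {H : History} :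
      Step V s₁ β ops s₂ → Exec V s₂ H s₃ → Exec V s₁ (ops ++ H) s₃

/-- The initial state of an OTM program `M` run by a main thread `t`. -/
def initState (M : Term) (t : TId) : MState :=
  ⟨⟨fun _ => none, fun _ => none, ⟨{t}, fun _ => none⟩, ∅⟩, [.plain t M]⟩

/-- `H` is a history describing an execution of an OTM program. -/
def OTMHistory (H : History) : Prop :=
  ∃ (V : Term → Option Term) (M : Term) (t : TId) (s : MState),
    Exec V (initState M t) H s

/-! ### Histories, local operations and opacity graphs (Guerraoui–Kapałka) -/

/-- The transaction issuing an operation. -/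
def Op.tx : Op → TrName
  | .read k _ _ => k
  | .write k _ _ => k
  | .commit k => k
  | .abort k => k
  | .merge k _ => k

def Op.loc? : Op → Option Loc
  | .read _ r _ => some r
  | .write _ r _ => some r
  | _ => none

def Op.isWrite : Op → Bool
  | .write _ _ _ => true
  | _ => false

/-- `op` is an operation by transaction `k` on location `r`. -/
def Op.touches (op : Op) (k : TrName) (r : Loc) : Bool :=
  op.tx == k && op.loc? == some r

/-- The transactions occurring in a history. -/
def History.txs (H : History) : List TrName :=
  H.flatMap fun op =>
    match op with
    | .merge k j => [k, j]
    | op => [op.tx]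

/-- The last operation by `k` on `r` strictly before position `i`. -/
def History.prevOn (H : History) (k : TrName) (r : Loc) (i : ℕ) : Option Op :=
  ((H.take i).filter (fun op => op.touches k r)).getLast?

/-- The first operation by `k` on `r` strictly after position `i`. -/
def History.nextOn (H : History) (k : TrName) (r : Loc) (i : ℕ) : Option Op :=
  ((H.drop (i + 1)).filter (fun op => op.touches k r)).head?

/-- The operation at position `i` of `H` is local: a read whose previous
    operation by the same transaction on the same location is a write, or a
    write whose next operation by the same transaction on the same location
    is a write. -/
def History.localIdx (H : History) (i : ℕ) : Bool :=
  match H[i]? with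
  | some (.read k r _) =>
    match H.prevOn k r i with
    | some op => op.isWrite
    | none => false
  | some (.write k r _) =>
    match H.nextOn k r i with
    | some op => op.isWrite
    | none => false
  | _ => false

/-- `nonlocal(H)`: the longest sub-history of `H` without local operations. -/
def History.nonlocal (H : History) : History :=
  ((List.range H.length).filter (fun i => ! H.localIdx i)).filterMap
    (fun i => H[i]?)

def History.committed (H : History) (k : TrName) : Prop := Op.commit k ∈ H

def History.aborted (H : History) (k : TrName) : Prop := Op.abort k ∈ H

/-- A vertex/transaction is red iff it is running or aborted,
    i.e. not committed. -/
def History.red (H : History) (k : TrName) : Prop := ¬ H.committed k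

/-- `k` is live (running) in `H`. -/
def History.live (H : History) (k : TrName) : Prop :=
  k ∈ H.txs ∧ ¬ H.committed k ∧ ¬ H.aborted k

/-- `a ≺_H b`: `a` becomes committed or aborted in `H` before `b` issues
    its first operation. -/
def History.happensBefore (H : History) (a b : TrName) : Prop :=
  ∃ i, (H[(i : ℕ)]? = some (.commit a) ∨ H[(i : ℕ)]? = some (.abort a)) ∧
    ∀ j op, H[(j : ℕ)]? = some op → op.tx = b → i < j

/-- `k` reads (the value of) location `r` from `k'` in `H`. -/
def History.readsFromAt (H : History) (k k' : TrName) (r : Loc) : Prop :=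
  ∃ i j v, i < j ∧
    H[(i : ℕ)]? = some (.write k' r v) ∧
    H[(j : ℕ)]? = some (.read k r v) ∧
    ∀ l op, i < l → l < j → H[(l : ℕ)]? = some op →
      op.isWrite = true → op.loc? ≠ some r

/-- `k` reads something written by `k'` (merges are dependencies of this
    kind: a merge amounts to reading a fresh location written by `k'`). -/
def History.readsFrom (H : History) (k k' : TrName) : Prop :=
  (∃ r, H.readsFromAt k k' r) ∨ Op.merge k k' ∈ H

/-- The edge relation of the opacity graph `OPG(H, ≪)` (cases (a)–(d)). -/
def OPGEdge (H : History) (lt : TrName → TrName → Prop) (k k' : TrName) : Prop :=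
  H.happensBefore k' k
  ∨ H.readsFrom k k'
  ∨ (lt k' k ∧ ∃ r, (∃ v, Op.read k' r v ∈ H) ∧ (∃ v, Op.write k r v ∈ H))
  ∨ (H.committed k' ∧
      ∃ r k'', lt k' k'' ∧ (∃ v, Op.write k' r v ∈ H) ∧ H.readsFromAt k'' k r)

/-- An edge of `OPG(H, ≪)` is red iff case (b) applies. -/
def OPGRedEdge (H : History) (k k' : TrName) : Prop := H.readsFrom k k'

/-- `OPG(H, ≪)` is well-formed: all edges leaving red vertices are red. -/
def OPGWellFormed (H : History) (lt : TrName → TrName → Prop) : Prop :=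
  ∀ k k', OPGEdge H lt k k' → H.red k → OPGRedEdge H k k'

/-- `OPG(H, ≪)` is acyclic. -/
def OPGAcyclic (H : History) (lt : TrName → TrName → Prop) : Prop :=
  ∀ k, ¬ Relation.TransGen (OPGEdge H lt) k k

/-- `lt` is a total order on the transactions of `H`. -/
def TotalOrderOn (H : History) (lt : TrName → TrName → Prop) : Prop :=
  (∀ k, ¬ lt k k) ∧ (∀ a b c, lt a b → lt b c → lt a c) ∧
  (∀ k, k ∈ H.txs → ∀ k', k' ∈ H.txs → k ≠ k' → lt k k' ∨ lt k' k)

/-- `complete(H)`: `H` extended with a commit or an abort for every live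
    transaction of `H`. -/
def IsCompletion (H H' : History) : Prop :=
  ∃ C : History, H' = H ++ C ∧
    (∀ op ∈ C, (∃ k, op = Op.commit k ∨ op = Op.abort k) ∧ H.live op.tx) ∧
    (∀ k, H.live k → ∃ op ∈ C, Op.tx op = k) ∧
    C.Pairwise (fun a b => Op.tx a ≠ Op.tx b)

/-- Two histories are equivalent: same operations, and each transaction
    issues the same sequence of operations in both. -/
def EquivHist (S H : History) : Prop :=
  S.Perm H ∧ ∀ k, S.filter (fun op => op.tx == k) = H.filter (fun op => op.tx == k)

/-- A history is sequential if its happens-before relation is total. -/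
def SequentialHist (S : History) : Prop :=
  ∀ k, k ∈ S.txs → ∀ k', k' ∈ S.txs → k ≠ k' →
    S.happensBefore k k' ∨ S.happensBefore k' k

/-- Local consistency: every local read is preceded by a write (by the same
    transaction, on the same location) writing the read value. -/
def LocallyConsistent (H : History) : Prop :=
  ∀ i k r v, H[i]? = some (.read k r v) → H.localIdx i = true →
    H.prevOn k r i = some (.write k r v)

/-- Consistency of a history. -/
def Consistent (H : History) : Prop :=
  LocallyConsistent H ∧
  ∀ k r v, Op.read k r v ∈ H.nonlocal → ∃ k', Op.write k' r v ∈ H.nonlocal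

/-!
Apart from commit and abort, which `cleanup` the claims of the transaction they act on, no rule
of the machine deletes an entry of the working memory: `NewVar`, `Read1` and `Write1` only add
entries at unclaimed locations, while `Read2` and `Write2` rename the claims of the acting
transaction `k` into those of the claim holder `j`, recording `merge k j`. The nested rules
(`orElse`, `isolated`) and the multicast rules inherit this by induction on the derivation,
composing the merge chains along the internal steps.
-/

/-- `Δ'` still claims every location that `Δ` claims for `k`, now for a transaction that `k`
has been merged into by a chain of the merges in `ops`. -/
def ClaimsPersist (ops : List Op) (Δ Δ' : Loc → Option (Term × TrName)) (k : TrName) : Prop :=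
  ∀ r M, Δ r = some (M, k) →
    ∃ M' j, Δ' r = some (M', j) ∧ Relation.ReflTransGen (fun a b => Op.merge a b ∈ ops) k j

def Label.Releases : Label → TrName → Prop
  | .co k, j | .ab k _ _, j | .abBar k _ _, j => k = j
  | _, _ => False

namespace ClaimsPersist

variable {ops ops' : List Op} {Δ Δ' Δ'' : Loc → Option (Term × TrName)} {k : TrName}

theorem refl : ClaimsPersist ops Δ Δ k :=
  fun _ M hr => ⟨M, k, hr, .refl⟩

theorem mono (h : ops ⊆ ops') (hp : ClaimsPersist ops Δ Δ' k) : ClaimsPersist ops' Δ Δ' k :=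
  fun r M hr =>
    let ⟨M', j, hr', hkj⟩ := hp r M hr
    ⟨M', j, hr', Relation.ReflTransGen.mono (fun _ _ hm => h hm) _ _ hkj⟩

theorem append (h₁ : ClaimsPersist ops Δ Δ' k) (h₂ : ∀ j, ClaimsPersist ops' Δ' Δ'' j) :
    ClaimsPersist (ops ++ ops') Δ Δ'' k := by
  intro r M hr
  obtain ⟨M₁, j₁, hr₁, hkj₁⟩ := h₁ r M hr
  obtain ⟨M₂, j₂, hr₂, hj₁j₂⟩ := h₂ j₁ r M₁ hr₁
  exact ⟨M₂, j₂, hr₂,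
    (Relation.ReflTransGen.mono (fun _ _ hm => List.mem_append_left _ hm) _ _ hkj₁).trans
      (Relation.ReflTransGen.mono (fun _ _ hm => List.mem_append_right _ hm) _ _ hj₁j₂)⟩

theorem updFn_of_eq_none {r₀ : Loc} {v : Term × TrName} (h : Δ r₀ = none) :
    ClaimsPersist ops Δ (updFn Δ r₀ v) k := by
  intro r M hr
  have hne : r ≠ r₀ := by rintro rfl; simp [h] at hr
  exact ⟨M, k, by simp [updFn, hne, hr], .refl⟩

theorem cleanup_of_ne {k₀ : TrName} (hk : k ≠ k₀) : ClaimsPersist ops Δ (cleanup k₀ Δ) k :=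
  fun r M hr => ⟨M, k, by simp [cleanup, hr, hk], .refl⟩

theorem renameWork {k₀ j : TrName} (hmerge : k₀ ≠ j → Op.merge k₀ j ∈ ops) :
    ClaimsPersist ops Δ (renameWork Δ k₀ j) k := by
  intro r M hr
  by_cases hk : k = k₀
  · subst hk
    refine ⟨M, j, by simp [_root_.renameWork, hr], ?_⟩
    by_cases hkj : k = j
    · exact hkj ▸ .refl
    · exact .single (hmerge hkj)
  · exact ⟨M, k, by simp [_root_.renameWork, hr, hk], .refl⟩

theorem updFn_renameWork {k₀ j : TrName} {r₀ : Loc} {M₀ M : Term}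
    (h : Δ r₀ = some (M₀, j)) (hmerge : k₀ ≠ j → Op.merge k₀ j ∈ ops) :
    ClaimsPersist ops Δ (updFn (_root_.renameWork Δ k₀ j) r₀ (M, j)) k := by
  intro r M' hr
  by_cases hr₀ : r = r₀
  · subst hr₀
    obtain rfl : k = j := by simp_all
    exact ⟨M, k, by simp [updFn], .refl⟩
  · obtain ⟨M'', j', hr', hkj'⟩ := ClaimsPersist.renameWork hmerge r M' hr
    exact ⟨M'', j', by simp [updFn, hr₀, hr'], hkj'⟩

end ClaimsPersist

theorem merge_mem_ite {k j : TrName} {a b : Op} (h : k ≠ j) :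
    Op.merge k j ∈ (if k = j then [a] else [.merge k j, b]) := by
  simp [h]

theorem Step.claimsPersist {V : Term → Option Term} {s s' : MState} {β : Label} {ops : List Op}
    (h : Step V s β ops s') {k : TrName} (hk : ¬ β.Releases k) :
    ClaimsPersist ops s.mem.work s'.mem.work k := by
  induction h using Step.rec
    (motive_2 := fun s ops s' _ => ∀ k, ClaimsPersist ops s.mem.work s'.mem.work k)
    generalizing k with
  | permC _ _ _ ih => exact ih hk
  | inChar | outChar | termIO | forkIO | termT | forkT | orElse2 | newTx =>
    exact ClaimsPersist.refl
  | newVar _ hfree | read1 hfree | write1 hfree => exact .updFn_of_eq_none hfree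
  | read2 => exact .renameWork merge_mem_ite
  | write2 hclaim => exact .updFn_renameWork hclaim merge_mem_ite
  | orElse1 _ _ ih | isolatedR _ _ ih => exact ih k
  | commitTx | abort1 | abort2 | abort3 => exact .cleanup_of_ne (Ne.symm hk)
  | mcastAb _ _ ih => exact (ih hk).mono (List.subset_append_left _ _)
  | mcastCo _ _ ih => exact (ih hk).mono fun _ hm => List.mem_dedup.mpr (List.mem_append_left _ hm)
  | mcastGroup _ _ _ ih => exact ih hk
  | refl => exact .refl
  | cons _ _ ih₁ ih₂ => exact (ih₁ id).append ih₂

/-- Claimed locations are released only by commits, aborts or restarts: if in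
    the memory `m` the working memory claims `r` for transaction `k`, i.e.
    `Δ(r) = (M, k)`, and the machine performs any transition whose label is
    neither a commit of `k` nor an abort involving `k` (restarts/retries have
    no transition of their own), then `r` is still claimed in the resulting
    state: `Δ'(r) = (M', j)` for some term `M'` and transaction name `j`,
    where `j` may differ from `k` only as the result of (a chain of) merge
    renamings of `k` issued by the transition. -/
theorem otm_claims_persist (V : Term → Option Term) :
    ∀ (m m' : Mem) (P P' : Family) (β : Label) (ops : List Op),
      Step V ⟨m, P⟩ β ops ⟨m', P'⟩ →
      ∀ r M k, m.work r = some (M, k) →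
        β ≠ Label.co k →
        (∀ t N, β ≠ Label.ab k t N) →
        (∀ t N, β ≠ Label.abBar k t N) →
        ∃ M' j, m'.work r = some (M', j) ∧
          Relation.ReflTransGen (fun a b => Op.merge a b ∈ ops) k j := by
  intro m m' P P' β ops h r M k hr hco hab habBar
  have hk : ¬ β.Releases k := by
    cases β <;> simp_all [Label.Releases]
  exact h.claimsPersist hk r M hr
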